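/- arXiv:1805.07639 — 6 statements merged into one kernel-verified Lean document; each statement's English description precedes it below -/
import Mathlib

section
/- Let (xᵢ, yᵢ), i = 1,…,N, be real numbers with D = N·Σxᵢ² − (Σxᵢ)² ≠ 0, and let M = (N·Σxᵢyᵢ − (Σxᵢ)(Σyᵢ))/D and H = (N·Σyᵢ² − (Σyᵢ)²)/D. If x̂ᵢ = αxᵢ + βyᵢ, ŷᵢ = γxᵢ + δyᵢ, and D̂ = N·Σx̂ᵢ² − (Σx̂ᵢ)² ≠ 0, then the coefficients M̂, Ĥ of the transformed cloud (defined analogously) satisfy M̂ = ((αδ+βγ)M + βδH + αγ)/(2αβM + β²H + α²) and Ĥ = (2γδM + δ²H + γ²)/(2αβM + β²H + α²). -/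
lemma aux1 (n Sx Sy A B C α β γ δ : ℝ) (hA : n*A - Sx^2 ≠ 0) :
    (n*(α*γ*A + (α*δ+β*γ)*B + β*δ*C) - (α*Sx+β*Sy)*(γ*Sx+δ*Sy)) /
      (n*(α^2*A+2*α*β*B+β^2*C) - (α*Sx+β*Sy)^2)
    = ((α*δ+β*γ)*((n*B - Sx*Sy)/(n*A - Sx^2)) + β*δ*((n*C - Sy^2)/(n*A - Sx^2)) + α*γ) /
      (2*α*β*((n*B-Sx*Sy)/(n*A-Sx^2)) + β^2*((n*C-Sy^2)/(n*A-Sx^2)) + α^2) := by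
  have hnum : (α*δ+β*γ)*((n*B - Sx*Sy)/(n*A - Sx^2)) + β*δ*((n*C - Sy^2)/(n*A - Sx^2)) + α*γ
      = (n*(α*γ*A + (α*δ+β*γ)*B + β*δ*C) - (α*Sx+β*Sy)*(γ*Sx+δ*Sy)) / (n*A - Sx^2) := by
    field_simp
    ring
  have hden : 2*α*β*((n*B-Sx*Sy)/(n*A-Sx^2)) + β^2*((n*C-Sy^2)/(n*A-Sx^2)) + α^2
      = (n*(α^2*A+2*α*β*B+β^2*C) - (α*Sx+β*Sy)^2) / (n*A - Sx^2) := by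
    field_simp
    ring
  rw [hnum, hden, div_div_div_comm, div_self hA, div_one]

lemma aux2 (n Sx Sy A B C α β γ δ : ℝ) (hA : n*A - Sx^2 ≠ 0) :
    (n*(γ^2*A + 2*γ*δ*B + δ^2*C) - (γ*Sx+δ*Sy)^2) /
      (n*(α^2*A+2*α*β*B+β^2*C) - (α*Sx+β*Sy)^2)
    = (2*γ*δ*((n*B - Sx*Sy)/(n*A - Sx^2)) + δ^2*((n*C - Sy^2)/(n*A - Sx^2)) + γ^2) /
      (2*α*β*((n*B-Sx*Sy)/(n*A-Sx^2)) + β^2*((n*C-Sy^2)/(n*A-Sx^2)) + α^2) := by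
  have hnum : 2*γ*δ*((n*B - Sx*Sy)/(n*A - Sx^2)) + δ^2*((n*C - Sy^2)/(n*A - Sx^2)) + γ^2
      = (n*(γ^2*A + 2*γ*δ*B + δ^2*C) - (γ*Sx+δ*Sy)^2) / (n*A - Sx^2) := by
    field_simp
    ring
  have hden : 2*α*β*((n*B-Sx*Sy)/(n*A-Sx^2)) + β^2*((n*C-Sy^2)/(n*A-Sx^2)) + α^2
      = (n*(α^2*A+2*α*β*B+β^2*C) - (α*Sx+β*Sy)^2) / (n*A - Sx^2) := by
    field_simp
    ring
  rw [hnum, hden, div_div_div_comm, div_self hA, div_one]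

theorem stmt_4 (N : ℕ) (x y xh yh : Fin N → ℝ) (α β γ δ M H Mh Hh : ℝ)
    (hx : ∀ i, xh i = α * x i + β * y i)
    (hy : ∀ i, yh i = γ * x i + δ * y i)
    (hD : (N : ℝ) * (∑ i, (x i)^2) - (∑ i, x i)^2 ≠ 0)
    (hDh : (N : ℝ) * (∑ i, (xh i)^2) - (∑ i, xh i)^2 ≠ 0)
    (hM : M = ((N : ℝ) * (∑ i, x i * y i) - (∑ i, x i) * (∑ i, y i)) /
      ((N : ℝ) * (∑ i, (x i)^2) - (∑ i, x i)^2))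
    (hH : H = ((N : ℝ) * (∑ i, (y i)^2) - (∑ i, y i)^2) /
      ((N : ℝ) * (∑ i, (x i)^2) - (∑ i, x i)^2))
    (hMh : Mh = ((N : ℝ) * (∑ i, xh i * yh i) - (∑ i, xh i) * (∑ i, yh i)) /
      ((N : ℝ) * (∑ i, (xh i)^2) - (∑ i, xh i)^2))
    (hHh : Hh = ((N : ℝ) * (∑ i, (yh i)^2) - (∑ i, yh i)^2) /
      ((N : ℝ) * (∑ i, (xh i)^2) - (∑ i, xh i)^2)) :
    Mh = ((α*δ + β*γ)*M + β*δ*H + α*γ) / (2*α*β*M + β^2*H + α^2) ∧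
    Hh = (2*γ*δ*M + δ^2*H + γ^2) / (2*α*β*M + β^2*H + α^2) := by
  have exh : ∑ i, xh i = α * ∑ i, x i + β * ∑ i, y i := by
    rw [Finset.mul_sum, Finset.mul_sum, ← Finset.sum_add_distrib]
    exact Finset.sum_congr rfl fun i _ => hx i
  have eyh : ∑ i, yh i = γ * ∑ i, x i + δ * ∑ i, y i := by
    rw [Finset.mul_sum, Finset.mul_sum, ← Finset.sum_add_distrib]
    exact Finset.sum_congr rfl fun i _ => hy i
  have exh2 : ∑ i, (xh i)^2 = α^2 * ∑ i, (x i)^2 + 2*α*β * ∑ i, x i * y i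
      + β^2 * ∑ i, (y i)^2 := by
    rw [Finset.mul_sum, Finset.mul_sum, Finset.mul_sum, ← Finset.sum_add_distrib,
      ← Finset.sum_add_distrib]
    exact Finset.sum_congr rfl fun i _ => by rw [hx]; ring
  have eyh2 : ∑ i, (yh i)^2 = γ^2 * ∑ i, (x i)^2 + 2*γ*δ * ∑ i, x i * y i
      + δ^2 * ∑ i, (y i)^2 := by
    rw [Finset.mul_sum, Finset.mul_sum, Finset.mul_sum, ← Finset.sum_add_distrib,
      ← Finset.sum_add_distrib]
    exact Finset.sum_congr rfl fun i _ => by rw [hy]; ring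
  have exy : ∑ i, xh i * yh i = α*γ * ∑ i, (x i)^2 + (α*δ + β*γ) * ∑ i, x i * y i
      + β*δ * ∑ i, (y i)^2 := by
    rw [Finset.mul_sum, Finset.mul_sum, Finset.mul_sum, ← Finset.sum_add_distrib,
      ← Finset.sum_add_distrib]
    exact Finset.sum_congr rfl fun i _ => by rw [hx, hy]; ring
  subst hM hH hMh hHh
  rw [exh, eyh, exh2, eyh2, exy]
  constructor
  · rw [show (N:ℝ) * (α*γ * ∑ i, (x i)^2 + (α*δ + β*γ) * ∑ i, x i * y i + β*δ * ∑ i, (y i)^2)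
        - (α * ∑ i, x i + β * ∑ i, y i) * (γ * ∑ i, x i + δ * ∑ i, y i)
      = (N:ℝ)*(α*γ*(∑ i, (x i)^2) + (α*δ+β*γ)*(∑ i, x i * y i) + β*δ*(∑ i, (y i)^2))
        - (α*(∑ i, x i)+β*(∑ i, y i))*(γ*(∑ i, x i)+δ*(∑ i, y i)) from by ring,
      show (N:ℝ) * (α^2 * ∑ i, (x i)^2 + 2*α*β * ∑ i, x i * y i + β^2 * ∑ i, (y i)^2)
        - (α * ∑ i, x i + β * ∑ i, y i)^2
      = (N:ℝ)*(α^2*(∑ i, (x i)^2)+2*α*β*(∑ i, x i * y i)+β^2*(∑ i, (y i)^2))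
        - (α*(∑ i, x i)+β*(∑ i, y i))^2 from by ring]
    exact aux1 N (∑ i, x i) (∑ i, y i) (∑ i, (x i)^2) (∑ i, x i * y i) (∑ i, (y i)^2)
      α β γ δ hD
  · rw [show (N:ℝ) * (γ^2 * ∑ i, (x i)^2 + 2*γ*δ * ∑ i, x i * y i + δ^2 * ∑ i, (y i)^2)
        - (γ * ∑ i, x i + δ * ∑ i, y i)^2
      = (N:ℝ)*(γ^2*(∑ i, (x i)^2) + 2*γ*δ*(∑ i, x i * y i) + δ^2*(∑ i, (y i)^2))
        - (γ*(∑ i, x i)+δ*(∑ i, y i))^2 from by ring,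
      show (N:ℝ) * (α^2 * ∑ i, (x i)^2 + 2*α*β * ∑ i, x i * y i + β^2 * ∑ i, (y i)^2)
        - (α * ∑ i, x i + β * ∑ i, y i)^2
      = (N:ℝ)*(α^2*(∑ i, (x i)^2)+2*α*β*(∑ i, x i * y i)+β^2*(∑ i, (y i)^2))
        - (α*(∑ i, x i)+β*(∑ i, y i))^2 from by ring]
    exact aux2 N (∑ i, x i) (∑ i, y i) (∑ i, (x i)^2) (∑ i, x i * y i) (∑ i, (y i)^2)
      α β γ δ hD
end

section
/- Let A = (cos φ, sin φ; −sin φ, cos φ) be a rotation matrix, and let (M̂, Ĥ) be the induced transformation of (M, H): M̂ = ((cos²φ − sin²φ)M + sinφ cosφ·H − sinφ cosφ)/(2 cosφ sinφ·M + sin²φ·H + cos²φ), Ĥ = (−2 sinφ cosφ·M + cos²φ·H + sin²φ)/(2 cosφ sinφ·M + sin²φ·H + cos²φ). Assume the denominator and Ĥ + 1, H + 1 are nonzero. Then (M̂² − Ĥ)/(Ĥ + 1)² = (M² − H)/(H + 1)². -/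
/-! The pair (M, H) stands for the symmetric matrix S = [[1, M], [M, H]]: the transformation is the
congruence S ↦ A S Aᵀ followed by the rescaling that makes the top left entry 1, and
(M² - H)/(H + 1)² = -det S/(tr S)². The quotient det S/(tr S)ⁿ is unchanged by nonzero scalings,
and determinant and trace are unchanged by congruence with an orthogonal matrix such as a rotation. -/

open Matrix

section

variable {n : Type*} [Fintype n] [DecidableEq n]

theorem det_div_trace_pow_card_smul {t : ℝ} (ht : t ≠ 0) (S : Matrix n n ℝ) :
    (t • S).det / (t • S).trace ^ Fintype.card n = S.det / S.trace ^ Fintype.card n := by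
  rw [det_smul, trace_smul, smul_eq_mul, mul_pow, mul_div_mul_left _ _ (pow_ne_zero _ ht)]

variable {R : Matrix n n ℝ} (hR : R ∈ orthogonalGroup n ℝ) (S : Matrix n n ℝ)
include hR

theorem trace_mul_mul_transpose_of_mem_orthogonalGroup : (R * S * Rᵀ).trace = S.trace := by
  rw [trace_mul_comm, ← Matrix.mul_assoc, (mem_orthogonalGroup_iff' n ℝ).mp hR, Matrix.one_mul]

theorem det_mul_mul_transpose_of_mem_orthogonalGroup : (R * S * Rᵀ).det = S.det := by
  rw [det_mul, det_mul, mul_right_comm, ← det_mul, (mem_orthogonalGroup_iff n ℝ).mp hR, det_one,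
    one_mul]

end

theorem rotation_mem_orthogonalGroup (φ : ℝ) :
    !![Real.cos φ, Real.sin φ; -Real.sin φ, Real.cos φ] ∈ orthogonalGroup (Fin 2) ℝ := by
  rw [mem_orthogonalGroup_iff, one_fin_two]
  ext i j
  fin_cases i <;> fin_cases j <;>
    simp only [Matrix.mul_apply, Fin.sum_univ_two, transpose_apply, of_apply, cons_val',
      cons_val_zero, cons_val_one, cons_val_fin_one, Fin.isValue, Fin.zero_eta, Fin.mk_one]
  · linear_combination Real.cos_sq_add_sin_sq φ
  · ring
  · ring
  · linear_combination Real.sin_sq_add_cos_sq φ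

theorem sq_sub_div_add_one_sq_eq_neg_det_div_trace_sq (M H : ℝ) :
    (M ^ 2 - H) / (H + 1) ^ 2 = -((!![1, M; M, H]).det / (!![1, M; M, H]).trace ^ 2) := by
  simp only [det_fin_two_of, trace_fin_two_of, ← neg_div]
  ring

theorem stmt_10_general (M H φ : ℝ) (Mh Hh : ℝ)
    (hden : 2*Real.cos φ*Real.sin φ*M + (Real.sin φ)^2*H + (Real.cos φ)^2 ≠ 0)
    (hMh : Mh = (((Real.cos φ)^2 - (Real.sin φ)^2)*M + Real.sin φ*Real.cos φ*H
        - Real.sin φ*Real.cos φ) /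
      (2*Real.cos φ*Real.sin φ*M + (Real.sin φ)^2*H + (Real.cos φ)^2))
    (hHh : Hh = (-2*Real.sin φ*Real.cos φ*M + (Real.cos φ)^2*H + (Real.sin φ)^2) /
      (2*Real.cos φ*Real.sin φ*M + (Real.sin φ)^2*H + (Real.cos φ)^2)) :
    (Mh^2 - Hh) / (Hh + 1)^2 = (M^2 - H) / (H + 1)^2 := by
  set D := 2*Real.cos φ*Real.sin φ*M + (Real.sin φ)^2*H + (Real.cos φ)^2
  set R := !![Real.cos φ, Real.sin φ; -Real.sin φ, Real.cos φ]
  have hR : R ∈ orthogonalGroup (Fin 2) ℝ := rotation_mem_orthogonalGroup φ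
  rw [eq_div_iff hden] at hMh hHh
  have hcongr : R * !![1, M; M, H] * Rᵀ = D • !![1, Mh; Mh, Hh] := by
    ext i j
    fin_cases i <;> fin_cases j <;>
      simp only [Matrix.mul_apply, Fin.sum_univ_two, transpose_apply, of_apply, cons_val',
        cons_val_zero, cons_val_one, cons_val_fin_one, Fin.isValue, Fin.zero_eta, Fin.mk_one,
        Matrix.smul_apply, smul_eq_mul, R, D]
    · ring
    · linear_combination -hMh
    · linear_combination -hMh
    · linear_combination -hHh
  have hscale := det_div_trace_pow_card_smul hden !![1, Mh; Mh, Hh]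
  rw [Fintype.card_fin, ← hcongr, det_mul_mul_transpose_of_mem_orthogonalGroup hR,
    trace_mul_mul_transpose_of_mem_orthogonalGroup hR] at hscale
  rw [sq_sub_div_add_one_sq_eq_neg_det_div_trace_sq, sq_sub_div_add_one_sq_eq_neg_det_div_trace_sq,
    hscale]

theorem stmt_10 (M H φ : ℝ) (Mh Hh : ℝ)
    (hden : 2*Real.cos φ*Real.sin φ*M + (Real.sin φ)^2*H + (Real.cos φ)^2 ≠ 0)
    (hMh : Mh = (((Real.cos φ)^2 - (Real.sin φ)^2)*M + Real.sin φ*Real.cos φ*H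
        - Real.sin φ*Real.cos φ) /
      (2*Real.cos φ*Real.sin φ*M + (Real.sin φ)^2*H + (Real.cos φ)^2))
    (hHh : Hh = (-2*Real.sin φ*Real.cos φ*M + (Real.cos φ)^2*H + (Real.sin φ)^2) /
      (2*Real.cos φ*Real.sin φ*M + (Real.sin φ)^2*H + (Real.cos φ)^2))
    (hH1 : H + 1 ≠ 0) (hHh1 : Hh + 1 ≠ 0) :
    (Mh^2 - Hh) / (Hh + 1)^2 = (M^2 - H) / (H + 1)^2 :=
  stmt_10_general M H φ Mh Hh hden hMh hHh
end

section
/- Under the induced transformation of (M, H) by a matrix (α, β; γ, δ) with denominator D₀ = 2αβM + β²H + α² ≠ 0, we have M̂² − Ĥ = (αδ − βγ)²·(M² − H)/D₀². In particular, the sign of M² − H is preserved when det A = αδ − βγ ≠ 0. -/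
theorem stmt_11 (M H α β γ δ : ℝ)
    (hden : 2*α*β*M + β^2*H + α^2 ≠ 0)
    (Mh Hh : ℝ)
    (hMh : Mh = ((α*δ + β*γ)*M + β*δ*H + α*γ) / (2*α*β*M + β^2*H + α^2))
    (hHh : Hh = (2*γ*δ*M + δ^2*H + γ^2) / (2*α*β*M + β^2*H + α^2)) :
    Mh^2 - Hh = (α*δ - β*γ)^2 * (M^2 - H) / (2*α*β*M + β^2*H + α^2)^2 := by
  subst hMh hHh
  field_simp
  ring
end

section
/- Let M̂, Ĥ be the transformed coefficients of (M, H) under a matrix (α, β; γ, δ) with D₀ = 2αβM + β²H + α² ≠ 0. For the matrix D = (0.4, −0.4; −0.05, 0.9) and the induced transformation (M,H) ↦ (M̂, Ĥ), the function I(M,H) = (M² − H)/(8H − 1 + 10M)² satisfies I(M̂, Ĥ) = I(M, H), provided 0.8·(−0.4)M + 0.16H + 0.16 ≠ 0, 8H − 1 + 10M ≠ 0 and 8Ĥ − 1 + 10M̂ ≠ 0. -/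
set_option maxHeartbeats 1000000

theorem stmt_12 (M H Mh Hh : ℝ)
    (hden : 2*(2/5 : ℝ)*(-2/5)*M + ((-2/5 : ℝ))^2*H + ((2/5 : ℝ))^2 ≠ 0)
    (hMh : Mh = (((2/5 : ℝ)*(9/10) + (-2/5)*(-1/20))*M + (-2/5)*(9/10)*H + (2/5)*(-1/20)) /
      (2*(2/5)*(-2/5)*M + ((-2/5 : ℝ))^2*H + ((2/5 : ℝ))^2))
    (hHh : Hh = (2*(-1/20 : ℝ)*(9/10)*M + ((9/10 : ℝ))^2*H + ((-1/20 : ℝ))^2) /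
      (2*(2/5)*(-2/5)*M + ((-2/5 : ℝ))^2*H + ((2/5 : ℝ))^2))
    (h1 : 8*H - 1 + 10*M ≠ 0) (h2 : 8*Hh - 1 + 10*Mh ≠ 0) :
    (Mh^2 - Hh) / (8*Hh - 1 + 10*Mh)^2 = (M^2 - H) / (8*H - 1 + 10*M)^2 := by
  obtain ⟨D, hD⟩ : ∃ D : ℝ, D = 2*(2/5 : ℝ)*(-2/5)*M + ((-2/5 : ℝ))^2*H + ((2/5 : ℝ))^2 := ⟨_, rfl⟩
  rw [← hD] at hMh hHh hden
  have e1 : Mh^2 - Hh = (M^2 - H)*(17/50)^2 / D^2 := by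
    rw [hMh, hHh]; field_simp; rw [hD]; ring
  have e2 : 8*Hh - 1 + 10*Mh = (8*H - 1 + 10*M)*(17/50) / D := by
    rw [hMh, hHh]; field_simp; rw [hD]; ring
  rw [e1, e2]
  field_simp
end

section
/- Let b₁₁, b₁₂, b₂₁, b₂₂ ∈ ℝ and φ, φ* ∈ ℝ. Consider the matrix A(φ) = I + (φ − φ*)·B where B = (b₁₁, b₁₂; b₂₁, b₂₂), with entries α = 1 + tb₁₁, β = tb₁₂, γ = tb₂₁, δ = 1 + tb₂₂ for t = φ − φ*. Let (M̂, Ĥ) be the induced transformation of (M, H) under A(φ), with denominator D₀ = 2αβM + β²H + α² ≠ 0. If additionally b₁₂H − b₂₁ + (b₁₁ − b₂₂)M ≠ 0 and b₁₂Ĥ − b₂₁ + (b₁₁ − b₂₂)M̂ ≠ 0, then (M̂² − Ĥ)/(b₁₂Ĥ − b₂₁ + (b₁₁−b₂₂)M̂)² = (M² − H)/(b₁₂H − b₂₁ + (b₁₁−b₂₂)M)². -/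
/-!
Write `S = [[1, M], [M, H]]` and `A = [[α, β], [γ, δ]]`. Then `(M̂, Ĥ)` is read off the congruent
matrix `A S Aᵀ`, rescaled by its `(1,1)` entry `D = α² + 2αβM + β²H`. Hence
`M̂² - Ĥ = -det(A S Aᵀ) / D² = (M² - H) (det A / D)²`. The denominator of the invariant is
`-tr(J B S)` with `J = [[0, 1], [-1, 0]]`; since `A = 1 + tB` commutes with `B` and
`Aᵀ J A = det A • J`, it is multiplied by `det A / D` as well, so the quotient does not change.
-/

section

variable {K : Type*} [Field K]

theorem sq_sub_congr_eq (α β γ δ M H : K) :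
    (((α*δ + β*γ)*M + β*δ*H + α*γ) / (2*α*β*M + β^2*H + α^2))^2
        - (2*γ*δ*M + δ^2*H + γ^2) / (2*α*β*M + β^2*H + α^2)
      = (M^2 - H) * ((α*δ - β*γ) / (2*α*β*M + β^2*H + α^2))^2 := by
  field_simp
  ring

theorem commutator_form_congr_eq {b11 b12 b21 b22 t α β γ δ : K} (M H : K)
    (hα : α = 1 + t*b11) (hβ : β = t*b12) (hγ : γ = t*b21) (hδ : δ = 1 + t*b22)
    (hD : 2*α*β*M + β^2*H + α^2 ≠ 0) :
    b12*((2*γ*δ*M + δ^2*H + γ^2) / (2*α*β*M + β^2*H + α^2)) - b21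
        + (b11 - b22)*(((α*δ + β*γ)*M + β*δ*H + α*γ) / (2*α*β*M + β^2*H + α^2))
      = (b12*H - b21 + (b11 - b22)*M) * ((α*δ - β*γ) / (2*α*β*M + β^2*H + α^2)) := by
  generalize hDdef : 2*α*β*M + β^2*H + α^2 = D at hD ⊢
  field_simp
  subst hDdef hα hβ hγ hδ
  ring

theorem div_sq_eq_of_scaled {N L N' L' c : K} (hN : N' = N * c^2) (hL : L' = L * c)
    (hL' : L' ≠ 0) : N' / L'^2 = N / L^2 := by
  subst hN hL
  have hc : c ≠ 0 := right_ne_zero_of_mul hL'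
  rw [mul_pow, mul_div_mul_right _ _ (pow_ne_zero 2 hc)]

end

theorem stmt_13_general (M H b11 b12 b21 b22 φ φs : ℝ)
    (α β γ δ : ℝ)
    (hα : α = 1 + (φ - φs)*b11) (hβ : β = (φ - φs)*b12)
    (hγ : γ = (φ - φs)*b21) (hδ : δ = 1 + (φ - φs)*b22)
    (hden : 2*α*β*M + β^2*H + α^2 ≠ 0)
    (Mh Hh : ℝ)
    (hMh : Mh = ((α*δ + β*γ)*M + β*δ*H + α*γ) / (2*α*β*M + β^2*H + α^2))
    (hHh : Hh = (2*γ*δ*M + δ^2*H + γ^2) / (2*α*β*M + β^2*H + α^2))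
    (h2 : b12*Hh - b21 + (b11 - b22)*Mh ≠ 0) :
    (Mh^2 - Hh) / (b12*Hh - b21 + (b11 - b22)*Mh)^2 =
      (M^2 - H) / (b12*H - b21 + (b11 - b22)*M)^2 := by
  subst hMh hHh
  exact div_sq_eq_of_scaled (sq_sub_congr_eq α β γ δ M H)
    (commutator_form_congr_eq M H hα hβ hγ hδ hden) h2

theorem stmt_13 (M H b11 b12 b21 b22 φ φs : ℝ)
    (α β γ δ : ℝ)
    (hα : α = 1 + (φ - φs)*b11) (hβ : β = (φ - φs)*b12)
    (hγ : γ = (φ - φs)*b21) (hδ : δ = 1 + (φ - φs)*b22)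
    (hden : 2*α*β*M + β^2*H + α^2 ≠ 0)
    (Mh Hh : ℝ)
    (hMh : Mh = ((α*δ + β*γ)*M + β*δ*H + α*γ) / (2*α*β*M + β^2*H + α^2))
    (hHh : Hh = (2*γ*δ*M + δ^2*H + γ^2) / (2*α*β*M + β^2*H + α^2))
    (h1 : b12*H - b21 + (b11 - b22)*M ≠ 0)
    (h2 : b12*Hh - b21 + (b11 - b22)*Mh ≠ 0) :
    (Mh^2 - Hh) / (b12*Hh - b21 + (b11 - b22)*Mh)^2 =
      (M^2 - H) / (b12*H - b21 + (b11 - b22)*M)^2 :=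
  stmt_13_general M H b11 b12 b21 b22 φ φs α β γ δ hα hβ hγ hδ hden Mh Hh hMh hHh h2
end

section
/- Let F : ℝ → ℝ be differentiable and let b₁₂, b₂₁, ε ∈ ℝ. Define I(M, H) = F((M² − H)/(b₁₂H − b₂₁ + εM)²) on the open set where b₁₂H − b₂₁ + εM ≠ 0. Then I satisfies the PDE [(H − 2M²)b₁₂ − εM + b₂₁]·∂I/∂M + 2[b₂₁M − b₁₂HM − εH]·∂I/∂H = 0 at every point of that set. -/
/-!
With `D = b₁₂H − b₂₁ + εM`, the ratio `g = (M² − H)/D²` is a first integral of the vector field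
`X = ((H − 2M²)b₁₂ − εM + b₂₁, 2(b₂₁M − b₁₂HM − εH))`: the derivative of `g` along `v` is
`((2Mv₁ − v₂)D − 2(M² − H)(εv₁ + b₁₂v₂))/D³`, and the numerator vanishes identically for `v = X`.
By the chain rule `X·(F ∘ g) = F′(g) (X·g) = 0`.
-/

theorem mul_apply_one_zero_add_mul_apply_zero_one {𝕜 : Type*} [NontriviallyNormedField 𝕜]
    (L : 𝕜 × 𝕜 →L[𝕜] 𝕜) (a b : 𝕜) : a * L (1, 0) + b * L (0, 1) = L (a, b) := by
  rw [show ((a, b) : 𝕜 × 𝕜) = a • (1, 0) + b • (0, 1) by simp, map_add, map_smul, map_smul,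
    smul_eq_mul, smul_eq_mul]

theorem fderiv_comp_apply_eq_zero {𝕜 E F G : Type*} [NontriviallyNormedField 𝕜]
    [NormedAddCommGroup E] [NormedSpace 𝕜 E] [NormedAddCommGroup F] [NormedSpace 𝕜 F]
    [NormedAddCommGroup G] [NormedSpace 𝕜 G] {g : F → G} {f : E → F} {x v : E}
    (hg : DifferentiableAt 𝕜 g (f x)) (hf : DifferentiableAt 𝕜 f x) (hv : fderiv 𝕜 f x v = 0) :
    fderiv 𝕜 (g ∘ f) x v = 0 := by
  rw [fderiv_comp x hg hf, ContinuousLinearMap.comp_apply, hv, map_zero]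

namespace Invariance

variable {b12 b21 ε : ℝ} {p : ℝ × ℝ}

noncomputable def firstIntegral (b12 b21 ε : ℝ) (p : ℝ × ℝ) : ℝ :=
  (p.1^2 - p.2) / (b12*p.2 - b21 + ε*p.1)^2

def vectorField (b12 b21 ε : ℝ) (p : ℝ × ℝ) : ℝ × ℝ :=
  ((p.2 - 2*p.1^2)*b12 - ε*p.1 + b21, 2*(b21*p.1 - b12*p.2*p.1 - ε*p.2))

theorem differentiableAt_firstIntegral (hp : b12*p.2 - b21 + ε*p.1 ≠ 0) :
    DifferentiableAt ℝ (firstIntegral b12 b21 ε) p := by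
  unfold firstIntegral
  fun_prop (disch := exact pow_ne_zero 2 hp)

theorem fderiv_firstIntegral_apply (hp : b12*p.2 - b21 + ε*p.1 ≠ 0) (v : ℝ × ℝ) :
    fderiv ℝ (firstIntegral b12 b21 ε) p v =
      ((2*p.1*v.1 - v.2) * (b12*p.2 - b21 + ε*p.1)
        - 2*(p.1^2 - p.2)*(ε*v.1 + b12*v.2)) / (b12*p.2 - b21 + ε*p.1)^3 := by
  have hM : HasFDerivAt (fun q : ℝ × ℝ => q.1) (ContinuousLinearMap.fst ℝ ℝ ℝ) p := hasFDerivAt_fst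
  have hH : HasFDerivAt (fun q : ℝ × ℝ => q.2) (ContinuousLinearMap.snd ℝ ℝ ℝ) p := hasFDerivAt_snd
  have hD := ((hH.const_mul b12).sub_const b21).fun_add (hM.const_mul ε)
  have h : HasFDerivAt (fun q : ℝ × ℝ => (q.1^2 - q.2) * ((b12*q.2 - b21 + ε*q.1)^2)⁻¹) _ p :=
    ((hM.pow 2).fun_sub hH).fun_mul ((hasFDerivAt_inv (pow_ne_zero 2 hp)).comp p (hD.pow 2))
  unfold firstIntegral
  simp only [div_eq_mul_inv]
  rw [h.fderiv]
  simp only [Nat.add_one_sub_one, pow_one, smul_add, nsmul_eq_mul, Nat.cast_ofNat,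
    ContinuousLinearMap.comp_add, ContinuousLinearMap.comp_smulₛₗ, Real.ringHom_apply, add_apply,
    smul_apply, ContinuousLinearMap.comp_apply, ContinuousLinearMap.coe_snd',
    ContinuousLinearMap.toSpanSingleton_apply, smul_eq_mul, mul_neg, ContinuousLinearMap.coe_fst',
    sub_apply]
  field_simp
  ring

theorem fderiv_firstIntegral_vectorField (hp : b12*p.2 - b21 + ε*p.1 ≠ 0) :
    fderiv ℝ (firstIntegral b12 b21 ε) p (vectorField b12 b21 ε p) = 0 := by
  rw [fderiv_firstIntegral_apply hp, vectorField, div_eq_zero_iff]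
  left
  ring

end Invariance

theorem stmt_16 (F : ℝ → ℝ) (hF : Differentiable ℝ F) (b12 b21 ε : ℝ)
    (I : ℝ × ℝ → ℝ)
    (hI : ∀ p : ℝ × ℝ, I p = F ((p.1^2 - p.2) / (b12*p.2 - b21 + ε*p.1)^2)) :
    ∀ p : ℝ × ℝ, b12*p.2 - b21 + ε*p.1 ≠ 0 →
      ((p.2 - 2*p.1^2)*b12 - ε*p.1 + b21) * fderiv ℝ I p (1, 0)
        + 2*(b21*p.1 - b12*p.2*p.1 - ε*p.2) * fderiv ℝ I p (0, 1) = 0 := by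
  intro p hp
  have hI_comp : I = F ∘ Invariance.firstIntegral b12 b21 ε := funext hI
  rw [mul_apply_one_zero_add_mul_apply_zero_one, hI_comp]
  exact fderiv_comp_apply_eq_zero (hF _)
    (Invariance.differentiableAt_firstIntegral hp) (Invariance.fderiv_firstIntegral_vectorField hp)
end
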